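/- Let A be a ring such that every A-module is Gorenstein flat-cotorsion. Then A is Quasi-Frobenius, i.e., every projective A-module is injective. -/

import Mathlib

open CategoryTheory

universe u

noncomputable section

variable (A : Type u) [Ring A]

/-- `Ext^n_A(M,N)`, as a `ℤ`-module, for left modules over an arbitrary ring `A`. -/
abbrev extAb (n : ℕ) (M N : ModuleCat.{u} A) : ModuleCat.{u} ℤ :=
  ((Ext ℤ (ModuleCat.{u} A) n).obj (Opposite.op M)).obj N

/-- Vanishing of `Ext^n_A(M,N)`. -/
def ExtVanish (n : ℕ) (M N : ModuleCat.{u} A) : Prop :=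
  Subsingleton (extAb A n M N)

/-- The subgroup of `E ⊗_ℤ M` by which one divides to obtain `E ⊗_A M`,
for a right `A`-module `E` and a left `A`-module `M`. -/
def tensorRel (E : Type u) [AddCommGroup E] [Module Aᵐᵒᵖ E]
    (M : Type u) [AddCommGroup M] [Module A M] :
    Submodule ℤ (TensorProduct ℤ E M) :=
  Submodule.span ℤ {x | ∃ (e : E) (a : A) (m : M),
    x = (MulOpposite.op a • e) ⊗ₜ[ℤ] m - e ⊗ₜ[ℤ] (a • m)}

/-- The tensor product `E ⊗_A M` of a right `A`-module `E` and a left `A`-module `M`. -/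
abbrev RTensor (E : Type u) [AddCommGroup E] [Module Aᵐᵒᵖ E]
    (M : Type u) [AddCommGroup M] [Module A M] : Type u :=
  TensorProduct ℤ E M ⧸ tensorRel A E M

/-- Functoriality of `E ⊗_A -` in the left-module variable. -/
def RTensor.map (E : Type u) [AddCommGroup E] [Module Aᵐᵒᵖ E]
    {M N : Type u} [AddCommGroup M] [Module A M] [AddCommGroup N] [Module A N]
    (f : M →ₗ[A] N) : RTensor A E M →ₗ[ℤ] RTensor A E N :=
  Submodule.mapQ _ _ (LinearMap.lTensor E f.toAddMonoidHom.toIntLinearMap) (by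
    simp only [tensorRel]
    rw [Submodule.span_le]
    rintro x ⟨e, a, m, rfl⟩
    simp only [SetLike.mem_coe, Submodule.mem_comap, map_sub, LinearMap.lTensor_tmul]
    refine Submodule.subset_span ⟨e, a, f m, ?_⟩
    erw [map_sub, LinearMap.lTensor_tmul, LinearMap.lTensor_tmul]; simp [LinearMap.map_smul])

/-- Functoriality of `- ⊗_A M` in the right-module variable. -/
def RTensor.mapRight {E E' : Type u} [AddCommGroup E] [Module Aᵐᵒᵖ E]
    [AddCommGroup E'] [Module Aᵐᵒᵖ E']
    (M : Type u) [AddCommGroup M] [Module A M]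
    (g : E →ₗ[Aᵐᵒᵖ] E') : RTensor A E M →ₗ[ℤ] RTensor A E' M :=
  Submodule.mapQ _ _ (LinearMap.rTensor M g.toAddMonoidHom.toIntLinearMap) (by
    simp only [tensorRel]
    rw [Submodule.span_le]
    rintro x ⟨e, a, m, rfl⟩
    simp only [SetLike.mem_coe, Submodule.mem_comap, map_sub, LinearMap.rTensor_tmul]
    refine Submodule.subset_span ⟨g e, a, m, ?_⟩
    erw [map_sub, LinearMap.rTensor_tmul, LinearMap.rTensor_tmul]; simp [LinearMap.map_smul])

/-- A left `A`-module `M` is flat if `- ⊗_A M` preserves injectivity of maps of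
right `A`-modules. -/
def IsFlat (M : Type u) [AddCommGroup M] [Module A M] : Prop :=
  ∀ (E E' : Type u) [AddCommGroup E] [Module Aᵐᵒᵖ E] [AddCommGroup E'] [Module Aᵐᵒᵖ E']
    (g : E →ₗ[Aᵐᵒᵖ] E'), Function.Injective g →
      Function.Injective (RTensor.mapRight A M g)

/-- A right `A`-module `E` is flat if `E ⊗_A -` preserves injectivity of maps of
left `A`-modules. -/
def IsFlatRight (E : Type u) [AddCommGroup E] [Module Aᵐᵒᵖ E] : Prop :=
  ∀ (M N : Type u) [AddCommGroup M] [Module A M] [AddCommGroup N] [Module A N]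
    (f : M →ₗ[A] N), Function.Injective f →
      Function.Injective (RTensor.map A E f)

/-- An `A`-module `C` is cotorsion if `Ext^1_A(F,C) = 0` for every flat `F`. -/
def Cotorsion (M : ModuleCat.{u} A) : Prop :=
  ∀ F : ModuleCat.{u} A, IsFlat A F → ExtVanish A 1 F M

/-- Flat dimension at most `n`. -/
def FlatDimLE : ℕ → ModuleCat.{u} A → Prop
  | 0, M => IsFlat A M
  | n + 1, M => ∃ (F : ModuleCat.{u} A) (π : F ⟶ M), IsFlat A F ∧
      Function.Surjective π ∧
      FlatDimLE n (ModuleCat.of A (LinearMap.ker (π.hom : F →ₗ[A] M)))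

/-- Finite flat dimension. -/
def FiniteFlatDim (M : ModuleCat.{u} A) : Prop := ∃ n, FlatDimLE A n M

/-- An `A`-module `M` is strongly cotorsion if `Ext^1_A(L,M) = 0` for every `L` of
finite flat dimension. -/
def StronglyCotorsion (M : ModuleCat.{u} A) : Prop :=
  ∀ L : ModuleCat.{u} A, FiniteFlatDim A L → ExtVanish A 1 L M

/-- Projective dimension at most `n`. -/
def ProjDimLE : ℕ → ModuleCat.{u} A → Prop
  | 0, M => Module.Projective A M
  | n + 1, M => ∃ (F : ModuleCat.{u} A) (π : F ⟶ M), Module.Projective A F ∧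
      Function.Surjective π ∧
      ProjDimLE n (ModuleCat.of A (LinearMap.ker (π.hom : F →ₗ[A] M)))

/-- A `ℤ`-indexed complex of `A`-modules (differential of degree `-1`). -/
structure ModComplex where
  X : ℤ → ModuleCat.{u} A
  d : ∀ i : ℤ, X (i + 1) ⟶ X i
  dd : ∀ i : ℤ, d (i + 1) ≫ d i = 0

/-- Acyclicity (exactness at every degree) of a complex. -/
def ModComplex.Acyclic (C : ModComplex A) : Prop :=
  ∀ i : ℤ, LinearMap.range ((C.d (i + 1)).hom : C.X (i + 1 + 1) →ₗ[A] C.X (i + 1)) =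
    LinearMap.ker ((C.d i).hom : C.X (i + 1) →ₗ[A] C.X i)

/-- `G` is Gorenstein injective: a cycle of a totally acyclic complex of injectives. -/
def GorensteinInjective (G : ModuleCat.{u} A) : Prop :=
  ∃ C : ModComplex A,
    (∀ i, Module.Injective A (C.X i)) ∧ C.Acyclic ∧
    (∀ E : ModuleCat.{u} A, Module.Injective A E →
      ∀ (i : ℤ) (f : E ⟶ C.X (i + 1)), f ≫ C.d i = 0 →
        ∃ g : E ⟶ C.X (i + 1 + 1), g ≫ C.d (i + 1) = f) ∧
    Nonempty (G ≃ₗ[A] LinearMap.ker ((C.d (-1)).hom : C.X (-1 + 1) →ₗ[A] C.X (-1)))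

/-- `G` is Gorenstein projective: a cycle of a totally acyclic complex of projectives. -/
def GorensteinProjective (G : ModuleCat.{u} A) : Prop :=
  ∃ C : ModComplex A,
    (∀ i, Module.Projective A (C.X i)) ∧ C.Acyclic ∧
    (∀ Q : ModuleCat.{u} A, Module.Projective A Q →
      ∀ (i : ℤ) (f : C.X (i + 1) ⟶ Q), C.d (i + 1) ≫ f = 0 →
        ∃ g : C.X i ⟶ Q, C.d i ≫ g = f) ∧
    Nonempty (G ≃ₗ[A] LinearMap.ker ((C.d (-1)).hom : C.X (-1 + 1) →ₗ[A] C.X (-1)))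

/-- `G` is Gorenstein flat: a cycle of an acyclic complex of flats which stays acyclic
after applying `E ⊗_A -` for every injective right `A`-module `E`. -/
def GorensteinFlat (G : ModuleCat.{u} A) : Prop :=
  ∃ C : ModComplex A,
    (∀ i, IsFlat A (C.X i)) ∧ C.Acyclic ∧
    (∀ (E : Type u) [AddCommGroup E] [Module Aᵐᵒᵖ E], Module.Injective Aᵐᵒᵖ E →
      ∀ i : ℤ,
        LinearMap.range (RTensor.map A E ((C.d (i + 1)).hom : C.X (i + 1 + 1) →ₗ[A] C.X (i + 1))) =
        LinearMap.ker (RTensor.map A E ((C.d i).hom : C.X (i + 1) →ₗ[A] C.X i))) ∧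
    Nonempty (G ≃ₗ[A] LinearMap.ker ((C.d (-1)).hom : C.X (-1 + 1) →ₗ[A] C.X (-1)))

/-- Flat-cotorsion module. -/
def FlatCotorsion (M : ModuleCat.{u} A) : Prop := IsFlat A M ∧ Cotorsion A M

/-- `G` is Gorenstein flat-cotorsion: a cokernel of a totally acyclic complex of
flat-cotorsion modules. -/
def GorensteinFlatCotorsion (G : ModuleCat.{u} A) : Prop :=
  ∃ C : ModComplex A,
    (∀ i, FlatCotorsion A (C.X i)) ∧ C.Acyclic ∧
    (∀ W : ModuleCat.{u} A, FlatCotorsion A W →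
      ∀ (i : ℤ) (f : C.X (i + 1) ⟶ W), C.d (i + 1) ≫ f = 0 →
        ∃ g : C.X i ⟶ W, C.d i ≫ g = f) ∧
    Nonempty (G ≃ₗ[A]
      (C.X 0 ⧸ LinearMap.range ((C.d 0).hom : C.X (0 + 1) →ₗ[A] C.X 0)))

/-- Gorenstein injective dimension at most `n`: `M` has an injective coresolution whose
`n`-th cosyzygy is Gorenstein injective. -/
def GidLE : ℕ → ModuleCat.{u} A → Prop
  | 0, M => GorensteinInjective A M
  | n + 1, M => ∃ (I : ModuleCat.{u} A) (ι : M ⟶ I), Module.Injective A I ∧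
      Function.Injective ι ∧
      GidLE n (ModuleCat.of A (I ⧸ LinearMap.range (ι.hom : M →ₗ[A] I)))

/-- Injective dimension at most `n`. -/
def InjDimLE : ℕ → ModuleCat.{u} A → Prop
  | 0, M => Module.Injective A M
  | n + 1, M => ∃ (I : ModuleCat.{u} A) (ι : M ⟶ I), Module.Injective A I ∧
      Function.Injective ι ∧
      InjDimLE n (ModuleCat.of A (I ⧸ LinearMap.range (ι.hom : M →ₗ[A] I)))

/-- Gorenstein flat dimension at most `n`. -/
def GfdLE : ℕ → ModuleCat.{u} A → Prop
  | 0, M => GorensteinFlat A M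
  | n + 1, M => ∃ (F : ModuleCat.{u} A) (π : F ⟶ M), IsFlat A F ∧
      Function.Surjective π ∧
      GfdLE n (ModuleCat.of A (LinearMap.ker (π.hom : F →ₗ[A] M)))

/-- The Gorenstein injective dimension, as an extended natural number. -/
def gid (M : ModuleCat.{u} A) : ℕ∞ := sInf {n : ℕ∞ | ∃ k : ℕ, n = k ∧ GidLE A k M}

/-- The injective dimension, as an extended natural number. -/
def injDim (M : ModuleCat.{u} A) : ℕ∞ := sInf {n : ℕ∞ | ∃ k : ℕ, n = k ∧ InjDimLE A k M}

/-- The projective dimension, as an extended natural number. -/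
def projDim (M : ModuleCat.{u} A) : ℕ∞ := sInf {n : ℕ∞ | ∃ k : ℕ, n = k ∧ ProjDimLE A k M}

/-- The finitistic projective dimension of `A`. -/
def FPD : ℕ∞ := sSup {d : ℕ∞ | ∃ M : ModuleCat.{u} A, d = projDim A M ∧ d ≠ ⊤}

/-- `D` is an `n`-th cosyzygy of `N` with respect to an injective coresolution:
there is an exact sequence `0 → N → E_0 → ⋯ → E_{n-1} → D → 0` with the `E_i` injective. -/
def CosyzygyOf : ℕ → ModuleCat.{u} A → ModuleCat.{u} A → Prop
  | 0, N, D => Nonempty (N ≃ₗ[A] D)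
  | n + 1, N, D => ∃ (E : ModuleCat.{u} A) (ι : N ⟶ E), Module.Injective A E ∧
      Function.Injective ι ∧
      CosyzygyOf n (ModuleCat.of A (E ⧸ LinearMap.range (ι.hom : N →ₗ[A] E))) D

/-- `M` is an `n`-th syzygy of `N` with respect to a resolution by flat modules:
there is an exact sequence `0 → M → F_{n-1} → ⋯ → F_0 → N → 0` with the `F_i` flat. -/
def SyzygyOf : ℕ → ModuleCat.{u} A → ModuleCat.{u} A → Prop
  | 0, M, N => Nonempty (M ≃ₗ[A] N)
  | n + 1, M, N => ∃ (F : ModuleCat.{u} A) (ι : M ⟶ F), IsFlat A F ∧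
      Function.Injective ι ∧
      SyzygyOf n (ModuleCat.of A (F ⧸ LinearMap.range (ι.hom : M →ₗ[A] F))) N

end

/-
If every module is Gorenstein flat-cotorsion, every map from a Gorenstein flat-cotorsion module
`N` lifts along a surjection whose kernel `W` is flat-cotorsion, i.e. "Ext¹(N, W) = 0": lift
first from the flat-cotorsion complex presenting `N` (using that `W` is cotorsion), then make the
lift descend to `N` by total acyclicity. A projective `P` is a direct summand of a term of such a
complex, hence flat-cotorsion, so every embedding of `P` into an injective module splits.
-/

namespace CategoryTheory.ShortComplex

variable {C : Type*} [Category* C] [Abelian C]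

theorem exists_lift_of_exact {S T : ShortComplex C} (hS : S.Exact) [Epi S.g]
    (hT : T.Exact) [Mono T.f] {X : C} (d : X ⟶ S.X₁) (hd : d ≫ S.f = 0)
    (hHom : ∀ β : S.X₁ ⟶ T.X₁, d ≫ β = 0 → ∃ γ : S.X₂ ⟶ T.X₁, S.f ≫ γ = β)
    (φ : S.X₃ ⟶ T.X₃) (α : S.X₂ ⟶ T.X₂) (hα : α ≫ T.g = S.g ≫ φ) :
    ∃ ψ : S.X₃ ⟶ T.X₂, ψ ≫ T.g = φ := by
  -- `S.f ≫ α` lands in `T.X₁` and is a cocycle there; subtracting a coboundary `γ ≫ T.f` from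
  -- `α` makes it vanish on the image of `S.f`, so that it descends along `S.g`.
  have hαf : (S.f ≫ α) ≫ T.g = 0 := by simp [hα]
  obtain ⟨γ, hγ⟩ := hHom (hT.lift _ hαf) (by
    rw [← cancel_mono T.f, Category.assoc, hT.lift_f, reassoc_of% hd]; simp)
  have hμ : S.f ≫ (α - γ ≫ T.f) = 0 := by simp [reassoc_of% hγ]
  refine ⟨hS.desc _ hμ, ?_⟩
  rw [← cancel_epi S.g, hS.g_desc_assoc, Preadditive.sub_comp, hα]
  simp

end CategoryTheory.ShortComplex

section

variable {A : Type u} [Ring A]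

theorem ExtVanish.exists_d_comp_eq {F K : ModuleCat.{u} A} (hv : ExtVanish A 1 F K)
    (R : ProjectiveResolution F) (β : R.complex.X 1 ⟶ K) (hβ : R.complex.d 2 1 ≫ β = 0) :
    ∃ γ : R.complex.X 0 ⟶ K, R.complex.d 1 0 ≫ γ = β := by
  have hzero : Limits.IsZero ((R.complex.linearYonedaObj ℤ K).homology 1) := by
    have : Subsingleton (extAb A 1 F K) := hv
    exact (ModuleCat.isZero_of_subsingleton _).of_iso (R.isoExt 1 K).symm
  have hexact := ((HomologicalComplex.exactAt_iff' _ 0 1 2 (by simp) (by simp)).mp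
    ((HomologicalComplex.exactAt_iff_isZero_homology _ 1).mpr hzero))
  exact (ShortComplex.moduleCat_exact_iff _).mp hexact β hβ

theorem ExtVanish.exists_lift {F : ModuleCat.{u} A} {T : ShortComplex (ModuleCat.{u} A)}
    (hT : T.ShortExact) (hv : ExtVanish A 1 F T.X₁) (φ : F ⟶ T.X₃) :
    ∃ ψ : F ⟶ T.X₂, ψ ≫ T.g = φ := by
  have := hT.mono_f
  have := hT.epi_g
  let R := ProjectiveResolution.of F
  exact ShortComplex.exists_lift_of_exact R.exact₀ hT.exact _ (R.complex.d_comp_d 2 1 0)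
    (hv.exists_d_comp_eq R) φ (Projective.factorThru (R.π.f 0 ≫ φ) T.g) (by simp)

namespace RTensor

variable {E E' : Type u} [AddCommGroup E] [Module Aᵐᵒᵖ E] [AddCommGroup E'] [Module Aᵐᵒᵖ E']
  {M N L : Type u} [AddCommGroup M] [Module A M] [AddCommGroup N] [Module A N]
  [AddCommGroup L] [Module A L]

theorem map_comp (f : M →ₗ[A] N) (g : N →ₗ[A] L) :
    RTensor.map A E (g ∘ₗ f) = RTensor.map A E g ∘ₗ RTensor.map A E f :=
  Submodule.linearMap_qext _ (TensorProduct.ext' fun _ _ => rfl)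

theorem map_id : RTensor.map A E (LinearMap.id : M →ₗ[A] M) = LinearMap.id :=
  Submodule.linearMap_qext _ (TensorProduct.ext' fun _ _ => rfl)

theorem map_comp_mapRight (g : E →ₗ[Aᵐᵒᵖ] E') (f : M →ₗ[A] N) :
    RTensor.map A E' f ∘ₗ RTensor.mapRight A M g = RTensor.mapRight A N g ∘ₗ RTensor.map A E f :=
  Submodule.linearMap_qext _ (TensorProduct.ext' fun _ _ => rfl)

end RTensor

theorem IsFlat.of_retract {M N : Type u} [AddCommGroup M] [Module A M] [AddCommGroup N]
    [Module A N] (i : M →ₗ[A] N) (r : N →ₗ[A] M) (hri : r ∘ₗ i = LinearMap.id)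
    (hN : IsFlat A N) : IsFlat A M := by
  intro E E' _ _ _ _ g hg
  have hi : Function.Injective (RTensor.map A E i) := by
    refine Function.LeftInverse.injective (g := RTensor.map A E r) fun x => ?_
    rw [← LinearMap.comp_apply, ← RTensor.map_comp, hri, RTensor.map_id, LinearMap.id_apply]
  refine .of_comp (f := RTensor.map A E' i) ?_
  rw [← LinearMap.coe_comp, RTensor.map_comp_mapRight, LinearMap.coe_comp]
  exact (hN E E' g hg).comp hi

theorem ExtVanish.of_retract {n : ℕ} {F K L : ModuleCat.{u} A} (h : Retract K L)
    (hL : ExtVanish A n F L) : ExtVanish A n F K := by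
  have : Subsingleton (extAb A n F L) := hL
  exact ((ModuleCat.mono_iff_injective
    (h.map ((Ext ℤ (ModuleCat.{u} A) n).obj (Opposite.op F))).i).mp inferInstance).subsingleton

theorem FlatCotorsion.of_retract {M N : ModuleCat.{u} A} (h : Retract M N)
    (hN : FlatCotorsion A N) : FlatCotorsion A M :=
  ⟨IsFlat.of_retract h.i.hom h.r.hom (congrArg ModuleCat.Hom.hom h.retract) hN.1,
    fun F hF => (hN.2 F hF).of_retract h⟩

theorem ModuleCat.exists_exact_of_equiv_quotient_range {X Y N : ModuleCat.{u} A} (d : X ⟶ Y)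
    (e : N ≃ₗ[A] Y ⧸ LinearMap.range d.hom) :
    ∃ (ε : Y ⟶ N) (hε : d ≫ ε = 0), (ShortComplex.mk d ε hε).Exact ∧ Epi ε := by
  let ε : Y ⟶ N := ModuleCat.ofHom (e.symm.toLinearMap ∘ₗ (LinearMap.range d.hom).mkQ)
  have hker : LinearMap.ker ε.hom = LinearMap.range d.hom := by
    simp [ε, LinearMap.ker_comp]
  refine ⟨ε, ?_, ?_, ?_⟩
  · ext x
    simp [ε]
  · exact (ShortComplex.moduleCat_exact_iff_range_eq_ker _).mpr hker.symm
  · exact (ModuleCat.epi_iff_surjective ε).mpr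
      (e.symm.surjective.comp (Submodule.mkQ_surjective _))

namespace GorensteinFlatCotorsion

variable {N : ModuleCat.{u} A}

theorem exists_lift (hN : GorensteinFlatCotorsion A N) {T : ShortComplex (ModuleCat.{u} A)}
    (hT : T.ShortExact) (hW : FlatCotorsion A T.X₁) (φ : N ⟶ T.X₃) :
    ∃ ψ : N ⟶ T.X₂, ψ ≫ T.g = φ := by
  obtain ⟨C, hC, -, hHom, ⟨e⟩⟩ := hN
  obtain ⟨ε, hε, hS, _⟩ := ModuleCat.exists_exact_of_equiv_quotient_range (C.d 0) e
  have := hT.mono_f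
  obtain ⟨α, hα⟩ := ExtVanish.exists_lift hT (hW.2 _ (hC 0).1) (ε ≫ φ)
  exact ShortComplex.exists_lift_of_exact hS hT.exact (C.d (0 + 1)) (C.dd 0)
    (hHom T.X₁ hW 0) φ α hα

theorem flatCotorsion_of_projective (hN : GorensteinFlatCotorsion A N)
    (hP : Module.Projective A N) : FlatCotorsion A N := by
  obtain ⟨C, hC, -, -, ⟨e⟩⟩ := hN
  obtain ⟨ε, -, -, hε⟩ := ModuleCat.exists_exact_of_equiv_quotient_range (C.d 0) e
  obtain ⟨σ, hσ⟩ := Module.projective_lifting_property ε.hom LinearMap.id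
    ((ModuleCat.epi_iff_surjective ε).mp hε)
  exact FlatCotorsion.of_retract ⟨ModuleCat.ofHom σ, ε, ModuleCat.hom_ext hσ⟩ (hC 0)

end GorensteinFlatCotorsion

theorem FlatCotorsion.exists_retraction {M I : ModuleCat.{u} A} (hM : FlatCotorsion A M)
    (ι : M ⟶ I) [Mono ι] (hcok : GorensteinFlatCotorsion A (Limits.cokernel ι)) :
    ∃ r : I ⟶ M, ι ≫ r = 𝟙 M := by
  let T := ShortComplex.mk ι (Limits.cokernel.π ι) (Limits.cokernel.condition ι)
  have hT : T.ShortExact :=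
    ⟨ShortComplex.exact_of_g_is_cokernel _ (Limits.cokernelIsCokernel ι)⟩
  obtain ⟨ψ, hψ⟩ := hcok.exists_lift hT hM (𝟙 _)
  let s := ShortComplex.Splitting.ofExactOfSection T hT.exact ψ hψ hT.mono_f
  exact ⟨s.r, s.f_r⟩

theorem ModuleCat.moduleInjective_of_forall_mono_split (M : ModuleCat.{u} A)
    (h : ∀ (I : ModuleCat.{u} A) (ι : M ⟶ I), Mono ι → ∃ r : I ⟶ M, ι ≫ r = 𝟙 M) :
    Module.Injective A M := by
  obtain ⟨r, hr⟩ := h _ (Injective.ι M) inferInstance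
  have : Injective M := Retract.injective ⟨Injective.ι M, r, hr⟩
  exact Module.injective_module_of_injective_object A M

end

/-- if every module is Gorenstein flat-cotorsion, then `A` is
Quasi-Frobenius: every projective module is injective. -/
theorem stmt12 (A : Type u) [Ring A]
    (h : ∀ M : ModuleCat.{u} A, GorensteinFlatCotorsion A M) :
    ∀ P : ModuleCat.{u} A, Module.Projective A P → Module.Injective A P := by
  intro P hP
  refine ModuleCat.moduleInjective_of_forall_mono_split P fun I ι _ => ?_
  exact ((h P).flatCotorsion_of_projective hP).exists_retraction ι (h _)
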